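/- A subset A of a topological space X is e*-θ-open if and only if for each x ∈ A there exists an e*-regular set U with x ∈ U ⊆ A. -/

import Mathlib

open Set Topology

variable {X : Type*} [TopologicalSpace X]

/-- δ-closure of A. -/
def deltaCl (A : Set X) : Set X :=
  {x | ∀ U : Set X, IsOpen U → x ∈ U → (interior (closure U) ∩ A).Nonempty}

/-- A is e*-open if A ⊆ cl(int(δ-cl A)). -/
def EStarOpen (A : Set X) : Prop := A ⊆ closure (interior (deltaCl A))

/-- A is e*-closed if its complement is e*-open. -/
def EStarClosed (A : Set X) : Prop := EStarOpen Aᶜ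

/-- e*-closure: intersection of all e*-closed supersets. -/
def eStarCl (A : Set X) : Set X := ⋂₀ {F | EStarClosed F ∧ A ⊆ F}

/-- e*-interior: union of all e*-open subsets. -/
def eStarInt (A : Set X) : Set X := ⋃₀ {U | EStarOpen U ∧ U ⊆ A}

/-- e*-regular: both e*-open and e*-closed. -/
def EStarRegular (A : Set X) : Prop := EStarOpen A ∧ EStarClosed A

/-- e*-θ-closure. -/
def eStarClTheta (A : Set X) : Set X :=
  {x | ∀ U : Set X, EStarOpen U → x ∈ U → (eStarCl U ∩ A).Nonempty}

/-- e*-θ-closed. -/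
def EStarThetaClosed (A : Set X) : Prop := A = eStarClTheta A

/-- e*-θ-open. -/
def EStarThetaOpen (A : Set X) : Prop := EStarThetaClosed Aᶜ

/-- quasi e*-θ-closed. -/
def QEStarThetaClosed (A : Set X) : Prop :=
  ∀ U : Set X, EStarThetaOpen U → A ⊆ U → eStarClTheta A ⊆ U

/-- e*-θ-kernel. -/
def eStarKerTheta (A : Set X) : Set X := ⋂₀ {U | EStarThetaOpen U ∧ A ⊆ U}

lemma subset_deltaCl (A : Set X) : A ⊆ deltaCl A :=
  fun x hx _ hU hxU => ⟨x, interior_maximal subset_closure hU hxU, hx⟩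

lemma deltaCl_mono {A B : Set X} (h : A ⊆ B) : deltaCl A ⊆ deltaCl B := fun _ hx U hU hxU =>
  (hx U hU hxU).mono (inter_subset_inter_right _ h)

lemma IsOpen.eStarOpen {A : Set X} (hA : IsOpen A) : EStarOpen A :=
  (interior_maximal (subset_deltaCl A) hA).trans subset_closure

lemma IsClosed.eStarClosed {A : Set X} (hA : IsClosed A) : EStarClosed A :=
  hA.isOpen_compl.eStarOpen

lemma eStarOpen_sUnion {S : Set (Set X)} (hS : ∀ A ∈ S, EStarOpen A) : EStarOpen (⋃₀ S) := by
  rintro x ⟨A, hAS, hxA⟩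
  exact closure_mono (interior_mono (deltaCl_mono (subset_sUnion_of_mem hAS))) (hS A hAS hxA)

lemma eStarClosed_sInter {S : Set (Set X)} (hS : ∀ F ∈ S, EStarClosed F) :
    EStarClosed (⋂₀ S) := by
  rw [EStarClosed, compl_sInter]
  exact eStarOpen_sUnion (forall_mem_image.2 hS)

lemma eStarClosed_eStarCl (A : Set X) : EStarClosed (eStarCl A) :=
  eStarClosed_sInter fun _ hF => hF.1

lemma subset_eStarCl (A : Set X) : A ⊆ eStarCl A :=
  subset_sInter fun _ hF => hF.2

lemma eStarCl_subset {A F : Set X} (hF : EStarClosed F) (hAF : A ⊆ F) : eStarCl A ⊆ F :=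
  sInter_subset_of_mem ⟨hF, hAF⟩

lemma eStarCl_eq_self {A : Set X} (hA : EStarClosed A) : eStarCl A = A :=
  (eStarCl_subset hA subset_rfl).antisymm (subset_eStarCl A)

-- `cl(int(δ-cl A))` is closed, hence e*-closed, so it already contains `eStarCl A`.
lemma eStarOpen_eStarCl {A : Set X} (hA : EStarOpen A) : EStarOpen (eStarCl A) :=
  (eStarCl_subset isClosed_closure.eStarClosed hA).trans
    (closure_mono (interior_mono (deltaCl_mono (subset_eStarCl A))))

lemma eStarRegular_eStarCl {A : Set X} (hA : EStarOpen A) :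
    EStarRegular (eStarCl A) :=
  ⟨eStarOpen_eStarCl hA, eStarClosed_eStarCl A⟩

lemma subset_eStarClTheta (A : Set X) : A ⊆ eStarClTheta A :=
  fun x hx _ _ hxU => ⟨x, subset_eStarCl _ hxU, hx⟩

lemma notMem_eStarClTheta_compl {A : Set X} {x : X} :
    x ∉ eStarClTheta Aᶜ ↔ ∃ U : Set X, EStarOpen U ∧ x ∈ U ∧ eStarCl U ⊆ A := by
  simp [eStarClTheta, inter_compl_nonempty_iff]

lemma eStarThetaOpen_iff {A : Set X} :
    EStarThetaOpen A ↔ ∀ x ∈ A, ∃ U : Set X, EStarOpen U ∧ x ∈ U ∧ eStarCl U ⊆ A := by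
  rw [EStarThetaOpen, EStarThetaClosed, subset_antisymm_iff,
    and_iff_right (subset_eStarClTheta Aᶜ), subset_compl_comm]
  simp only [subset_def, mem_compl_iff, notMem_eStarClTheta_compl]

theorem stmt4 (A : Set X) :
    EStarThetaOpen A ↔ ∀ x ∈ A, ∃ U : Set X, EStarRegular U ∧ x ∈ U ∧ U ⊆ A := by
  rw [eStarThetaOpen_iff]
  refine forall₂_congr fun x _ => ⟨?_, ?_⟩
  · rintro ⟨U, hU, hxU, hUA⟩
    exact ⟨eStarCl U, eStarRegular_eStarCl hU, subset_eStarCl U hxU, hUA⟩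
  · rintro ⟨U, ⟨hUo, hUc⟩, hxU, hUA⟩
    exact ⟨U, hUo, hxU, (eStarCl_eq_self hUc).symm ▸ hUA⟩
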